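/- Let V be a real inner product space family over points of M (pointwise inner products ⟨·,·⟩_g on 1-forms), let c : M → ℝ be smooth and positive, n ≥ 3, and let u, w be functions. Then pointwise, in dimension n with metric g̃ = c⁴g, the identity ⟨du, dw⟩_{c⁴g} dVol_{c⁴g} = ⟨d(c^{n-2}u), d(c^{n-2}w)⟩_g dVol_g − ⟨d(c^{n-2}), d(c^{n-2}uw)⟩_g dVol_g holds, where ⟨α,β⟩_{c⁴g} = c⁻⁴⟨α,β⟩_g and dVol_{c⁴g} = c^{2n} dVol_g. -/

import Mathlib

/-- Pointwise conformal transformation identity for the Dirichlet form: with `g̃ = c⁴g`,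
`⟨du, dw⟩_{c⁴g} dVol_{c⁴g} = ⟨d(c^{n-2}u), d(c^{n-2}w)⟩_g dVol_g
  - ⟨d(c^{n-2}), d(c^{n-2}uw)⟩_g dVol_g`,
where `⟨α,β⟩_{c⁴g} = c⁻⁴⟨α,β⟩_g`, `dVol_{c⁴g} = c^{2n} dVol_g`,
`d(c^{n-2}) = (n-2)c^{n-3} dc` and the Leibniz rule is used on the right-hand side.
Here `α = dc`, `β = du`, `γ = dw` are covectors at a point. -/
theorem conformal_dirichlet_pointwise_identity
    {V : Type*} [NormedAddCommGroup V] [InnerProductSpace ℝ V]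
    (n : ℕ) (hn : 3 ≤ n) (c u w : ℝ) (hc : 0 < c) (α β γ dp : V)
    (hdp : dp = (((n : ℝ) - 2) * c ^ (n - 3)) • α) :
    c ^ (2 * n) * ((c ^ 4)⁻¹) * (inner ℝ β γ : ℝ) =
      (inner ℝ (c ^ (n - 2) • β + u • dp) (c ^ (n - 2) • γ + w • dp) : ℝ)
        - (inner ℝ dp ((u * w) • dp + (c ^ (n - 2) * u) • γ + (c ^ (n - 2) * w) • β) : ℝ) := by
  obtain ⟨m, rfl⟩ : ∃ m, n = m + 3 := ⟨n - 3, by omega⟩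
  have h1 : m + 3 - 2 = m + 1 := rfl
  simp only [inner_add_left, inner_add_right, real_inner_smul_left, real_inner_smul_right,
    real_inner_comm β γ, h1]
  have hpow : c ^ (2 * (m + 3)) * (c ^ 4)⁻¹ = c ^ (m + 1) * c ^ (m + 1) := by
    rw [← pow_add]
    field_simp
    ring
  rw [hpow, real_inner_comm β dp]
  ring
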